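/- arXiv:2203.16476 — 3 statements merged into one kernel-verified Lean document; each statement's English description precedes it below -/
import Mathlib

section
/- Let A ∈ {0,1}^{D×N} be the incidence matrix of a path system (U, Π) where each path in Π is the unique shortest path between its endpoints in some weighted graph H on vertex set U. Then A has VC dimension at most 2, i.e., no 3 columns of A are shattered by the rows: for any three vertices u, v, w ∈ U there do not exist 8 paths in Π realizing all 8 possible intersection patterns with {u, v, w}. -/
open SimpleGraph

noncomputable def walkWeight {V : Type*} {G : SimpleGraph V} (w : Sym2 V → ℝ)
    {u v : V} (p : G.Walk u v) : ℝ :=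
  (p.edges.map w).sum

/-!
Take a path of the system through all three vertices. Two of them, `a` and `c`, bound a subwalk of
it containing all three, so the third vertex `b` lies strictly between them. A subwalk of a unique
shortest walk is again a unique shortest walk, so every path of the system through `a` and `c`
contains this subwalk and hence `b`: no path realizes the pattern `{a, c}`.
-/

lemma exists_mem_triple_ne_ne {α : Type*} {u v x : α} (huv : u ≠ v) (hux : u ≠ x) (hvx : v ≠ x)
    (a c : α) : ∃ b ∈ ({u, v, x} : Set α), b ≠ a ∧ b ≠ c := by
  simp only [Set.mem_insert_iff, Set.mem_singleton_iff, exists_eq_or_imp, exists_eq_left]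
  grind

section walkWeight

variable {V : Type*} {G : SimpleGraph V}

lemma walkWeight_append (w : Sym2 V → ℝ) {a b c : V} (p : G.Walk a b) (q : G.Walk b c) :
    walkWeight w (p.append q) = walkWeight w p + walkWeight w q := by
  simp [walkWeight, Walk.edges_append]

lemma walkWeight_reverse (w : Sym2 V → ℝ) {a b : V} (p : G.Walk a b) :
    walkWeight w p.reverse = walkWeight w p := by
  simp [walkWeight, Walk.edges_reverse, List.sum_reverse]

end walkWeight

namespace SimpleGraph.Walk

variable {V : Type*} {G : SimpleGraph V}

def IsUniqueMin (w : Sym2 V → ℝ) {a b : V} (p : G.Walk a b) : Prop :=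
  ∀ q : G.Walk a b, q ≠ p → walkWeight w p < walkWeight w q

namespace IsUniqueMin

variable {w : Sym2 V → ℝ}

lemma eq {a b : V} {p q : G.Walk a b} (hp : p.IsUniqueMin w) (hq : q.IsUniqueMin w) :
    p = q := by
  by_contra h
  exact (hp q (Ne.symm h)).not_gt (hq p h)

lemma reverse {a b : V} {p : G.Walk a b} (hp : p.IsUniqueMin w) : p.reverse.IsUniqueMin w := by
  intro q hq
  simpa [walkWeight_reverse] using hp q.reverse fun h => hq (by rw [← h, reverse_reverse])

lemma of_isSubwalk {a b c d : V} {p : G.Walk a b} {m : G.Walk c d} (hp : p.IsUniqueMin w)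
    (hm : m.IsSubwalk p) : m.IsUniqueMin w := by
  obtain ⟨ru, rv, rfl⟩ := hm
  intro q hq
  have hne : (ru.append q).append rv ≠ (ru.append m).append rv := by
    intro h
    exact hq (edges_injective (by simpa [edges_append] using congrArg edges h))
  have := hp _ hne
  simp only [walkWeight_append] at this
  linarith

end IsUniqueMin

variable [DecidableEq V]

lemma exists_append_forall_mem_support {S : Set V} (hS : S.Nonempty) {s t : V}
    (p : G.Walk s t) (hp : ∀ y ∈ S, y ∈ p.support) :
    ∃ c ∈ S, ∃ (m : G.Walk s c) (r : G.Walk c t), p = m.append r ∧ ∀ y ∈ S, y ∈ m.support := by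
  induction p generalizing S with
  | nil =>
    obtain ⟨c, hc⟩ := hS
    obtain rfl : c = _ := by simpa using hp c hc
    exact ⟨c, hc, nil, nil, rfl, hp⟩
  | @cons s s' t h p ih =>
    by_cases hS' : (S \ {s}).Nonempty
    · obtain ⟨c, hc, m, r, rfl, hm⟩ :=
        ih hS' fun y hy => by simpa [show y ≠ s from hy.2] using hp y hy.1
      refine ⟨c, hc.1, cons h m, r, rfl, fun y hy => ?_⟩
      by_cases hys : y = s
      · simp [hys]
      · simpa using Or.inr (hm y ⟨hy, hys⟩)
    · obtain ⟨c, hc⟩ := hS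
      have hSs : ∀ y ∈ S, y = s := fun y hy => by
        by_contra hys
        exact hS' ⟨y, hy, hys⟩
      obtain rfl := hSs c hc
      exact ⟨c, hc, nil, cons h p, rfl, fun y hy => by simp [hSs y hy]⟩

lemma exists_isSubwalk_forall_mem_support {S : Set V} (hS : S.Nonempty) {s t : V}
    (p : G.Walk s t) (hp : ∀ y ∈ S, y ∈ p.support) :
    ∃ a ∈ S, ∃ c ∈ S, ∃ m : G.Walk a c, m.IsSubwalk p ∧ ∀ y ∈ S, y ∈ m.support := by
  obtain ⟨c, hc, m, r, hpm, hm⟩ := exists_append_forall_mem_support hS p hp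
  obtain ⟨a, ha, m', r', hm', hm'S⟩ :=
    exists_append_forall_mem_support hS m.reverse (by simpa [support_reverse] using hm)
  have hsub : m'.reverse.IsSubwalk m :=
    isSubwalk_of_append_right (by rw [← reverse_reverse m, hm', reverse_append])
  exact ⟨a, ha, c, hc, m'.reverse, hsub.trans (isSubwalk_of_append_left hpm),
    by simpa [support_reverse] using hm'S⟩

lemma exists_isSubwalk_of_mem_support {s t a c : V} (p : G.Walk s t) (ha : a ∈ p.support)
    (hc : c ∈ p.support) :
    (∃ m : G.Walk a c, m.IsSubwalk p) ∨ ∃ m : G.Walk c a, m.IsSubwalk p := by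
  have hc' := hc
  rw [← take_spec p ha, mem_support_append_iff] at hc'
  rcases hc' with hc' | hc'
  · exact .inr ⟨_, (isSubwalk_dropUntil _ hc').trans (isSubwalk_takeUntil p ha)⟩
  · exact .inl ⟨_, (isSubwalk_takeUntil _ hc').trans (isSubwalk_dropUntil p ha)⟩

lemma IsUniqueMin.support_subset_of_isSubwalk {w : Sym2 V → ℝ} {s t s' t' a c : V}
    {p : G.Walk s t} {q : G.Walk s' t'} {m : G.Walk a c} (hp : p.IsUniqueMin w)
    (hq : q.IsUniqueMin w) (hm : m.IsSubwalk p) (ha : a ∈ q.support) (hc : c ∈ q.support) :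
    m.support ⊆ q.support := by
  have hmin := hp.of_isSubwalk hm
  rcases exists_isSubwalk_of_mem_support q ha hc with ⟨m', hm'⟩ | ⟨m', hm'⟩
  · rw [hmin.eq (hq.of_isSubwalk hm')]
    exact hm'.support_subset
  · rw [hmin.eq (hq.of_isSubwalk hm').reverse, support_reverse]
    exact fun y hy => hm'.support_subset (List.mem_reverse.mp hy)

end SimpleGraph.Walk

/-- A system of unique shortest paths has VC dimension at most 2: no three (distinct)
vertices are shattered by the paths. -/
theorem stmt5 {U : Type*} {G : SimpleGraph U} (w : Sym2 U → ℝ)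
    (Paths : Set (Σ a : U, Σ b : U, G.Walk a b))
    (hPaths : ∀ π ∈ Paths, (π.2.2 : G.Walk π.1 π.2.1).IsPath ∧
      ∀ q : G.Walk π.1 π.2.1, q ≠ π.2.2 → walkWeight w π.2.2 < walkWeight w q)
    (u v x : U) (huv : u ≠ v) (hux : u ≠ x) (hvx : v ≠ x) :
    ¬ (∀ s : Set U, s ⊆ {u, v, x} →
        ∃ π ∈ Paths, ∀ y ∈ ({u, v, x} : Set U), (y ∈ (π.2.2 : G.Walk π.1 π.2.1).support ↔ y ∈ s)) := by
  classical
  intro hshat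
  set S : Set U := {u, v, x}
  obtain ⟨π, hπ, hπS⟩ := hshat S subset_rfl
  obtain ⟨a, ha, c, hc, m, hm, hmS⟩ :=
    Walk.exists_isSubwalk_forall_mem_support ⟨u, by simp [S]⟩ π.2.2 fun y hy => (hπS y hy).2 hy
  obtain ⟨b, hb, hba, hbc⟩ := exists_mem_triple_ne_ne huv hux hvx a c
  obtain ⟨π', hπ', hπ'ac⟩ := hshat {a, c} (Set.insert_subset ha (Set.singleton_subset_iff.mpr hc))
  have hsub := Walk.IsUniqueMin.support_subset_of_isSubwalk (hPaths π hπ).2 (hPaths π' hπ').2 hm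
    ((hπ'ac a ha).2 (by simp)) ((hπ'ac c hc).2 (by simp))
  exact ((hπ'ac b hb).1 (hsub (hmS b hb))).elim hba hbc
end

section
/- Suppose for every matrix B formed by restricting columns of a {0,1}-matrix A to a subset of size m, there is a vector y ∈ [-1,1]^m with at least m/2 coordinates in {±1} and ‖B(y - y_start)‖_∞ ≤ c·m^{1/6} for any starting point y_start ∈ [-1,1]^m. Then iterating partial colorings starting from the zero vector yields a full coloring x ∈ {±1}^N with ‖Ax‖_∞ ≤ C·N^{1/6} for some constant C depending only on c, using the geometric decay of the number of fractional coordinates. -/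
/-!
Iterate the partial coloring step: each round fixes at least half of the still fractional
coordinates and moves every row sum by at most `c·m^p`, where `m` is the current number of
fractional coordinates. Since `m` at least halves in every round, the total movement is at
most `c·N^p·∑_{t≥0} 2^{-pt} = c·N^p / (1 - 2^{-p})`.
-/

open Finset

def HasPartialColorings {R ι : Type*} (A : Matrix R ι ℝ) (c p : ℝ) : Prop :=
  ∀ (I : Finset ι) (y0 : ι → ℝ), (∀ i ∈ I, |y0 i| ≤ 1) →
    ∃ y : ι → ℝ, (∀ i ∈ I, |y i| ≤ 1) ∧
      (∃ J ⊆ I, (#I : ℝ) ≤ 2 * (#J : ℝ) ∧ ∀ i ∈ J, y i = 1 ∨ y i = -1) ∧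
      ∀ j, |∑ i ∈ I, A j i * (y i - y0 i)| ≤ c * (#I : ℝ) ^ p

/-- `c · ∑_{t≥0} 2^{-pt}`. -/
noncomputable def coloringConst (c p : ℝ) : ℝ := c / (1 - (2 : ℝ) ^ (-p))

lemma two_rpow_neg_lt_one {p : ℝ} (hp : 0 < p) : (2 : ℝ) ^ (-p) < 1 :=
  Real.rpow_lt_one_of_one_lt_of_neg one_lt_two (neg_lt_zero.mpr hp)

lemma coloringConst_pos {c p : ℝ} (hc : 0 < c) (hp : 0 < p) : 0 < coloringConst c p :=
  div_pos hc (sub_pos.mpr (two_rpow_neg_lt_one hp))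

lemma coloringConst_nonneg {c p : ℝ} (hc : 0 ≤ c) (hp : 0 < p) : 0 ≤ coloringConst c p :=
  div_nonneg hc (sub_pos.mpr (two_rpow_neg_lt_one hp)).le

lemma coloringConst_mul_two_rpow_neg_add {c p : ℝ} (hp : 0 < p) :
    coloringConst c p * (2 : ℝ) ^ (-p) + c = coloringConst c p := by
  have h : 1 - (2 : ℝ) ^ (-p) ≠ 0 := (sub_pos.mpr (two_rpow_neg_lt_one hp)).ne'
  unfold coloringConst
  field_simp
  ring

lemma rpow_le_two_rpow_neg_mul_rpow {a b p : ℝ} (ha : 0 ≤ a) (hab : 2 * a ≤ b) (hp : 0 ≤ p) :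
    a ^ p ≤ (2 : ℝ) ^ (-p) * b ^ p :=
  calc a ^ p ≤ (2⁻¹ * b) ^ p := Real.rpow_le_rpow ha (by linarith) hp
    _ = (2 : ℝ) ^ (-p) * b ^ p := by
      rw [Real.mul_rpow (by norm_num) (by linarith), Real.inv_rpow (by norm_num),
        Real.rpow_neg (by norm_num)]

section Iteration

variable {R ι : Type*} [DecidableEq ι] {A : Matrix R ι ℝ} {c p : ℝ}

lemma sum_mul_sub_eq_of_eq_piecewise {I I' : Finset ι} (hI' : I' ⊆ I) {x y y' : ι → ℝ} (j : R)
    (hx : ∀ i ∉ I', x i = I.piecewise y' y i) :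
    ∑ i ∈ I, A j i * (x i - y i) =
      ∑ i ∈ I', A j i * (x i - I.piecewise y' y i) + ∑ i ∈ I, A j i * (y' i - y i) := by
  have hcomplete : ∑ i ∈ I', A j i * (x i - I.piecewise y' y i) =
      ∑ i ∈ I, A j i * (x i - I.piecewise y' y i) :=
    sum_subset hI' fun i _ hi => by rw [hx i hi, sub_self, mul_zero]
  rw [hcomplete, ← sum_add_distrib]
  refine sum_congr rfl fun i hi => ?_
  rw [piecewise_eq_of_mem _ _ _ hi]
  ring

theorem exists_coloring_of_hasPartialColorings (hc : 0 ≤ c) (hp : 0 < p)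
    (hA : HasPartialColorings A c p) (I : Finset ι) (y : ι → ℝ) (hy : ∀ i ∈ I, |y i| ≤ 1) :
    ∃ x : ι → ℝ, (∀ i ∉ I, x i = y i) ∧ (∀ i ∈ I, x i = 1 ∨ x i = -1) ∧
      ∀ j, |∑ i ∈ I, A j i * (x i - y i)| ≤ coloringConst c p * (#I : ℝ) ^ p := by
  induction I using Finset.strongInduction generalizing y with
  | H I ih =>
  rcases I.eq_empty_or_nonempty with rfl | hIne
  · exact ⟨y, fun _ _ => rfl, by simp, fun j => by
      simp [Real.zero_rpow hp.ne']⟩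
  obtain ⟨y', hy'1, ⟨J, hJI, hJcard, hJ⟩, hstep⟩ := hA I y hy
  have hJne : J.Nonempty := by
    rw [← card_pos]
    have : (0 : ℝ) < #I := by exact_mod_cast hIne.card_pos
    exact_mod_cast (by linarith : (0 : ℝ) < #J)
  set z := I.piecewise y' y
  have hz_mem : ∀ i ∈ I, z i = y' i := fun i hi => piecewise_eq_of_mem _ _ _ hi
  obtain ⟨x, hxz, hx, hxcost⟩ := ih (I \ J) (sdiff_ssubset hJI hJne) z
    fun i hi => by rw [hz_mem i (sdiff_subset hi)]; exact hy'1 i (sdiff_subset hi)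
  have hhalf : 2 * (#(I \ J) : ℝ) ≤ #I := by
    rw [card_sdiff_of_subset hJI, Nat.cast_sub (card_le_card hJI)]
    linarith
  refine ⟨x, fun i hi => ?_, fun i hi => ?_, fun j => ?_⟩
  · exact (hxz i fun h => hi (sdiff_subset h)).trans (piecewise_eq_of_notMem _ _ _ hi)
  · by_cases hiJ : i ∈ J
    · rw [hxz i fun h => (mem_sdiff.mp h).2 hiJ, hz_mem i hi]
      exact hJ i hiJ
    · exact hx i (mem_sdiff.mpr ⟨hi, hiJ⟩)
  · have hK := coloringConst_nonneg hc hp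
    calc |∑ i ∈ I, A j i * (x i - y i)|
        ≤ |∑ i ∈ I \ J, A j i * (x i - z i)| + |∑ i ∈ I, A j i * (y' i - y i)| := by
          rw [sum_mul_sub_eq_of_eq_piecewise sdiff_subset j hxz]
          exact abs_add_le _ _
      _ ≤ coloringConst c p * ((2 : ℝ) ^ (-p) * (#I : ℝ) ^ p) + c * (#I : ℝ) ^ p := by
          gcongr
          · exact (hxcost j).trans (mul_le_mul_of_nonneg_left
              (rpow_le_two_rpow_neg_mul_rpow (by positivity) hhalf hp.le) hK)
          · exact hstep j
      _ = coloringConst c p * (#I : ℝ) ^ p := by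
          rw [← mul_assoc, ← add_mul, coloringConst_mul_two_rpow_neg_add hp]

end Iteration

/-- Iterating partial colorings: if every column-restriction of a 0/1 matrix `A` to a set
`I` admits a partial coloring fixing at least half of `I` to `±1` while changing each row
sum by at most `c·|I|^{1/6}`, then starting from the zero vector one obtains a full
coloring `x ∈ {±1}^N` with `‖Ax‖_∞ ≤ C·N^{1/6}`, for a constant `C` depending only on `c`. -/
theorem stmt10 (c : ℝ) (hc : 0 < c) :
    ∃ C : ℝ, 0 < C ∧ ∀ (D N : ℕ) (A : Matrix (Fin D) (Fin N) ℝ),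
      (∀ j i, A j i = 0 ∨ A j i = 1) →
      (∀ (I : Finset (Fin N)) (y0 : Fin N → ℝ), (∀ i ∈ I, |y0 i| ≤ 1) →
        ∃ y : Fin N → ℝ, (∀ i ∈ I, |y i| ≤ 1) ∧
          (∃ J ⊆ I, (I.card : ℝ) ≤ 2 * (J.card : ℝ) ∧ ∀ i ∈ J, y i = 1 ∨ y i = -1) ∧
          ∀ j, |∑ i ∈ I, A j i * (y i - y0 i)| ≤ c * (I.card : ℝ) ^ ((1 : ℝ) / 6)) →
      ∃ x : Fin N → ℝ, (∀ i, x i = 1 ∨ x i = -1) ∧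
        ∀ j, |∑ i, A j i * x i| ≤ C * (N : ℝ) ^ ((1 : ℝ) / 6) := by
  refine ⟨coloringConst c (1 / 6), coloringConst_pos hc (by norm_num), fun D N A _ hA => ?_⟩
  obtain ⟨x, -, hx, hAx⟩ :=
    exists_coloring_of_hasPartialColorings hc.le (by norm_num) hA univ 0 (by simp)
  exact ⟨x, fun i => hx i (mem_univ i), fun j => by simpa using hAx j⟩
end

section
/- In the Thorup–Zwick style hierarchy, suppose distances satisfy: dist(w_i, v_{i-1}) ≤ dist(w_{i-1}, v_{i-1}) + 2α for each level i (where u_i = v_{i-1}, v_i = u_{i-1}, w_0 = u_0 = u, v_0 = v), and dist is a metric. Then by induction, dist(w_ℓ, u_ℓ) ≤ dist(w_0, u_0) + ℓ·dist(u,v) + 2ℓα = ℓ·dist(u,v) + 2ℓα, and consequently dist(u, w_ℓ) + dist(v, w_ℓ) ≤ (2ℓ+1)·dist(u,v) + 2(2ℓ+1)α. -/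
/-!
The pair `(u i, v i)` is `(u, v)` or `(v, u)`, so `dist(u_i, v_i) = dist(u, v)` at every level.
Hence the triangle inequality through `u_i` turns the hypothesis into
`dist(w_{i+1}, u_{i+1}) ≤ dist(w_i, u_i) + dist(u, v) + 2α`, which telescopes to the first bound.
For the second, route both `dist(u, w_ℓ)` and `dist(v, w_ℓ)` through `u_ℓ ∈ {u, v}`.
-/

section

variable {V : Type*}

lemma swap_iterate_eq_or_eq (u v : ℕ → V)
    (hu : ∀ i, u (i + 1) = v i) (hv : ∀ i, v (i + 1) = u i) (i : ℕ) :
    (u i = u 0 ∧ v i = v 0) ∨ (u i = v 0 ∧ v i = u 0) := by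
  induction i with
  | zero => exact Or.inl ⟨rfl, rfl⟩
  | succ n ih =>
    rw [hu, hv]
    exact ih.symm.imp And.symm And.symm

variable (d : V → V → ℝ)

lemma swap_iterate_dist_eq (hsymm : ∀ x y, d x y = d y x) (u v : ℕ → V)
    (hu : ∀ i, u (i + 1) = v i) (hv : ∀ i, v (i + 1) = u i) (i : ℕ) :
    d (u i) (v i) = d (u 0) (v 0) := by
  rcases swap_iterate_eq_or_eq u v hu hv i with ⟨hui, hvi⟩ | ⟨hui, hvi⟩
  · rw [hui, hvi]
  · rw [hui, hvi, hsymm]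

lemma dist_le_of_step_le (htri : ∀ x y z, d x z ≤ d x y + d y z) (D c : ℝ)
    (u v w : ℕ → V) (huv : ∀ i, d (u i) (v i) = D) (hu : ∀ i, u (i + 1) = v i)
    (hw : ∀ i, d (w (i + 1)) (v i) ≤ d (w i) (v i) + c) (i : ℕ) :
    d (w i) (u i) ≤ d (w 0) (u 0) + i * (D + c) := by
  induction i with
  | zero => simp
  | succ n ih =>
    have hstep : d (w n) (v n) ≤ d (w n) (u n) + D := huv n ▸ htri _ _ _
    rw [hu]
    push_cast
    linarith [hw n]

lemma dist_add_dist_le_of_eq_or_eq (hsymm : ∀ x y, d x y = d y x)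
    (htri : ∀ x y z, d x z ≤ d x y + d y z) (hself : ∀ x, d x x = 0)
    {a b x : V} (hx : x = a ∨ x = b) (y : V) :
    d a y + d b y ≤ d a b + 2 * d y x := by
  have ha := htri a x y
  have hb := htri b x y
  rw [hsymm x y] at ha hb
  rcases hx with rfl | rfl
  · linarith [hself x, hsymm b x]
  · linarith [hself x]

end

theorem stmt17_general {V : Type*} (d : V → V → ℝ)
    (hsymm : ∀ x y, d x y = d y x)
    (htri : ∀ x y z, d x z ≤ d x y + d y z)
    (hself : ∀ x, d x x = 0)
    (uu vv : V) (α : ℝ) (hα : 0 ≤ α)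
    (u v w : ℕ → V)
    (hu0 : u 0 = uu) (hw0 : w 0 = uu) (hv0 : v 0 = vv)
    (hui : ∀ i, u (i + 1) = v i) (hvi : ∀ i, v (i + 1) = u i)
    (hwi : ∀ i, d (w (i + 1)) (v i) ≤ d (w i) (v i) + 2 * α)
    (ℓ : ℕ) :
    d (w ℓ) (u ℓ) ≤ (ℓ : ℝ) * d uu vv + 2 * (ℓ : ℝ) * α ∧
      d uu (w ℓ) + d vv (w ℓ) ≤ (2 * (ℓ : ℝ) + 1) * d uu vv + 2 * (2 * (ℓ : ℝ) + 1) * α := by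
  have huv (i : ℕ) : d (u i) (v i) = d uu vv := by
    rw [swap_iterate_dist_eq d hsymm u v hui hvi, hu0, hv0]
  have hwu : d (w ℓ) (u ℓ) ≤ ℓ * d uu vv + 2 * ℓ * α := by
    have := dist_le_of_step_le d htri _ _ u v w huv hui hwi ℓ
    rw [hw0, hu0, hself] at this
    linarith
  have huℓ : u ℓ = uu ∨ u ℓ = vv := by
    rcases swap_iterate_eq_or_eq u v hui hvi ℓ with ⟨h, -⟩ | ⟨h, -⟩
    · exact Or.inl (h.trans hu0)
    · exact Or.inr (h.trans hv0)
  have hsum := dist_add_dist_le_of_eq_or_eq d hsymm htri hself huℓ (w ℓ)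
  exact ⟨hwu, by linarith⟩

/-- The Thorup–Zwick style induction: from `dist(w_{i+1}, v_i) ≤ dist(w_i, v_i) + 2α`
(with `u_{i+1} = v_i`, `v_{i+1} = u_i`, `u_0 = w_0 = u`, `v_0 = v`) one gets
`dist(w_ℓ, u_ℓ) ≤ ℓ·dist(u,v) + 2ℓα` and
`dist(u, w_ℓ) + dist(v, w_ℓ) ≤ (2ℓ+1)·dist(u,v) + 2(2ℓ+1)α`. -/
theorem stmt17 {V : Type*} (d : V → V → ℝ)
    (hsymm : ∀ x y, d x y = d y x)
    (htri : ∀ x y z, d x z ≤ d x y + d y z)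
    (hself : ∀ x, d x x = 0)
    (hnonneg : ∀ x y, 0 ≤ d x y)
    (uu vv : V) (α : ℝ) (hα : 0 ≤ α)
    (u v w : ℕ → V)
    (hu0 : u 0 = uu) (hw0 : w 0 = uu) (hv0 : v 0 = vv)
    (hui : ∀ i, u (i + 1) = v i) (hvi : ∀ i, v (i + 1) = u i)
    (hwi : ∀ i, d (w (i + 1)) (v i) ≤ d (w i) (v i) + 2 * α)
    (ℓ : ℕ) :
    d (w ℓ) (u ℓ) ≤ (ℓ : ℝ) * d uu vv + 2 * (ℓ : ℝ) * α ∧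
      d uu (w ℓ) + d vv (w ℓ) ≤ (2 * (ℓ : ℝ) + 1) * d uu vv + 2 * (2 * (ℓ : ℝ) + 1) * α :=
  stmt17_general d hsymm htri hself uu vv α hα u v w hu0 hw0 hv0 hui hvi hwi ℓ
end
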